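/- Let $Q$ be the group of upper triangular matrices in $GL_n(\mathbb{C})$ with positive real diagonal entries. Then for real $s$ and even integer $\kappa$ with $s+\kappa > n$: $\int_Q e^{-4\pi\,\mathrm{tr}(h^*h)}\,|\det(h^*h)|^{s+\kappa-1}\,\delta_B(h)\,dh = 2^{-n(n-1)}\prod_{i=1}^n \frac{\Gamma(s+\kappa-i)}{2^{s+\kappa-i}\cdot 2(2\pi)^{s+\kappa-i}}$, where $dh$ is the product of the measures $dt_i/t_i$ on the diagonal and Lebesgue measure on the strictly upper triangular complex entries, and $\delta_B(h)=\prod_i |h_{ii}|^{-2(i-1)}$ normalizes the Iwasawa decomposition. -/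

import Mathlib

open MeasureTheory

lemma setIntegral_pi_prod {n : ℕ} (f : Fin n → ℝ → ℝ) :
    ∫ d in {d : Fin n → ℝ | ∀ i, 0 < d i}, ∏ i, f i (d i)
      = ∏ i, ∫ t in Set.Ioi (0:ℝ), f i t := by
  have hS : {d : Fin n → ℝ | ∀ i, 0 < d i}
      = Set.pi Set.univ (fun _ => Set.Ioi (0:ℝ)) := by
    ext d; simp [Set.mem_pi]
  rw [hS, ← MeasureTheory.integral_indicator
    (MeasurableSet.univ_pi (fun _ => measurableSet_Ioi))]
  have hpt : ∀ d : Fin n → ℝ,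
      (Set.pi Set.univ fun _ => Set.Ioi (0:ℝ)).indicator
        (fun d : Fin n → ℝ => ∏ i, f i (d i)) d
      = ∏ i, (Set.Ioi (0:ℝ)).indicator (f i) (d i) := by
    intro d
    by_cases hd : ∀ i, 0 < d i
    · rw [Set.indicator_of_mem (by simp [Set.mem_pi]; exact hd)]
      exact Finset.prod_congr rfl fun i _ => (Set.indicator_of_mem (hd i) _).symm
    · push_neg at hd
      obtain ⟨i, hi⟩ := hd
      rw [Set.indicator_of_notMem (by simp [Set.mem_pi]; exact ⟨i, hi⟩)]
      refine (Finset.prod_eq_zero (Finset.mem_univ i) ?_).symm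
      exact Set.indicator_of_notMem (s := Set.Ioi (0:ℝ)) (by simpa using hi) _
  simp_rw [hpt]
  rw [MeasureTheory.volume_pi, MeasureTheory.integral_fintype_prod_eq_prod
    (fun i => (Set.Ioi (0:ℝ)).indicator (f i))]
  exact Finset.prod_congr rfl fun i _ =>
    MeasureTheory.integral_indicator measurableSet_Ioi

lemma onedim (A m : ℝ) (ha : 0 < A - m) :
    ∫ t in Set.Ioi (0:ℝ),
      Real.exp (-(4*Real.pi) * t^2) * (t^2)^A * t^(-(2*m)) * t⁻¹
      = Real.Gamma (A - m) / (2^(A-m) * (2 * (2*Real.pi)^(A-m))) := by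
  have hπ := Real.pi_pos
  have h1 : ∫ t in Set.Ioi (0:ℝ),
      Real.exp (-(4*Real.pi) * t^2) * (t^2)^A * t^(-(2*m)) * t⁻¹
      = ∫ t in Set.Ioi (0:ℝ), t ^ (2*(A-m)-1) * Real.exp (-(4*Real.pi) * t^(2:ℝ)) := by
    refine MeasureTheory.setIntegral_congr_fun measurableSet_Ioi (fun t ht => ?_)
    have ht0 : (0:ℝ) < t := ht
    have h2 : t ^ (2:ℝ) = t ^ 2 := by
      rw [show (2:ℝ) = ((2:ℕ):ℝ) by norm_num, Real.rpow_natCast]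
    rw [h2]
    have e1 : ((t^2 : ℝ))^A = t ^ (2*A) := by
      rw [← Real.rpow_natCast t 2, ← Real.rpow_mul ht0.le]; norm_num
    rw [e1, ← Real.rpow_neg_one t, mul_assoc, mul_assoc, ← Real.rpow_add ht0,
      ← Real.rpow_add ht0, show 2*A + (-(2*m) + -1) = 2*(A-m)-1 by ring, mul_comm]
  rw [h1, integral_rpow_mul_exp_neg_mul_rpow two_pos (by linarith) (by positivity),
    show (-(2*(A-m)-1+1)/2 : ℝ) = -(A-m) by ring,
    show ((2*(A-m)-1+1)/2 : ℝ) = A-m by ring,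
    Real.rpow_neg (by positivity), show (4*Real.pi : ℝ) = 2*(2*Real.pi) by ring,
    Real.mul_rpow two_pos.le (by positivity)]
  have p1 : (0:ℝ) < (2:ℝ)^(A-m) := Real.rpow_pos_of_pos two_pos _
  have p2 : (0:ℝ) < (2*Real.pi)^(A-m) := Real.rpow_pos_of_pos (by positivity) _
  field_simp

lemma cgauss : ∫ z : ℂ, Real.exp (-(4*Real.pi) * ‖z‖ ^ 2) = 4⁻¹ := by
  have hπ := Real.pi_pos
  have hpt : ∀ z : ℂ, Real.exp (-(4*Real.pi) * ‖z‖ ^ 2)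
      = Real.exp (-(4*Real.pi) * ‖z‖ ^ (2:ℝ)) := by
    intro z
    rw [show (2:ℝ) = ((2:ℕ):ℝ) by norm_num, Real.rpow_natCast]
  simp_rw [hpt]
  rw [Complex.integral_exp_neg_mul_rpow one_le_two (by positivity),
    show (-2/2 : ℝ) = -1 by norm_num, Real.rpow_neg_one,
    show (2/2 : ℝ) + 1 = 2 by norm_num, Real.Gamma_two]
  field_simp

lemma card_lt_pairs (n : ℕ) :
    2 * Fintype.card {p : Fin n × Fin n // p.1 < p.2} = n * (n - 1) := by
  have e : {p : Fin n × Fin n // p.1 < p.2} ≃ Σ j : Fin n, Fin j.val :=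
    { toFun := fun x => ⟨x.1.2, ⟨x.1.1.val, x.2⟩⟩
      invFun := fun y => ⟨(⟨y.2.val, lt_trans y.2.isLt y.1.isLt⟩, y.1), y.2.isLt⟩
      left_inv := fun x => rfl
      right_inv := fun y => rfl }
  rw [Fintype.card_congr e, Fintype.card_sigma]
  simp only [Fintype.card_fin]
  rw [Fin.sum_univ_eq_sum_range (fun j => j) n, mul_comm]
  rw [Finset.sum_range_id_mul_two]

/-- The archimedean local Rankin–Selberg integral over the group `Q` of upper
triangular matrices with positive real diagonal, parametrized by the diagonal
`d : Fin n → ℝ` (with multiplicative measure density `∏ (d i)⁻¹`) and the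
strictly upper triangular complex entries `u` (with Lebesgue measure); here
`tr(h^*h) = ∑ dᵢ² + ∑ |u_p|²`, `|det(h^*h)|^{s+κ-1} = (∏ dᵢ²)^{s+κ-1}` and
`δ_B(h) = ∏ dᵢ^{-2(i-1)}`. -/
theorem stmt_3 (n : ℕ) (hn : 0 < n) (s : ℝ) (κ : ℤ) (hκ : Even κ)
    (h : (n : ℝ) < s + (κ : ℝ)) :
    (∫ d in {d : Fin n → ℝ | ∀ i, 0 < d i},
      ∫ u : {p : Fin n × Fin n // p.1 < p.2} → ℂ,
        Real.exp (-(4 * Real.pi) *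
            ((∑ i, (d i) ^ 2) + ∑ p : {p : Fin n × Fin n // p.1 < p.2}, ‖u p‖ ^ 2)) *
          (∏ i, (d i) ^ 2) ^ (s + (κ : ℝ) - 1) *
          (∏ i : Fin n, (d i) ^ (-(2 * (i : ℝ)))) * ∏ i, (d i)⁻¹)
      = (2 : ℝ) ^ (-(n * (n - 1) : ℤ)) *
        ∏ i ∈ Finset.range n,
          (Real.Gamma (s + (κ : ℝ) - (i + 1)) /
            ((2 : ℝ) ^ (s + (κ : ℝ) - (i + 1)) *
              (2 * (2 * Real.pi) ^ (s + (κ : ℝ) - (i + 1))))) := by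
  set S : ℝ := s + (κ : ℝ) with hSdef
  set c : ℕ := Fintype.card {p : Fin n × Fin n // p.1 < p.2} with hc
  -- inner integral
  have hinner : ∀ d : Fin n → ℝ,
      (∫ u : {p : Fin n × Fin n // p.1 < p.2} → ℂ,
        Real.exp (-(4 * Real.pi) *
            ((∑ i, (d i) ^ 2) + ∑ p : {p : Fin n × Fin n // p.1 < p.2}, ‖u p‖ ^ 2)) *
          (∏ i, (d i) ^ 2) ^ (S - 1) *
          (∏ i : Fin n, (d i) ^ (-(2 * (i : ℝ)))) * ∏ i, (d i)⁻¹)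
      = (∏ i, (Real.exp (-(4 * Real.pi) * (d i) ^ 2) * ((d i) ^ 2) ^ (S - 1) *
          (d i) ^ (-(2 * (i : ℝ))) * (d i)⁻¹)) * (4:ℝ)⁻¹ ^ c := by
    intro d
    have key : ∀ u : {p : Fin n × Fin n // p.1 < p.2} → ℂ,
        Real.exp (-(4 * Real.pi) *
            ((∑ i, (d i) ^ 2) + ∑ p : {p : Fin n × Fin n // p.1 < p.2}, ‖u p‖ ^ 2)) *
          (∏ i, (d i) ^ 2) ^ (S - 1) *
          (∏ i : Fin n, (d i) ^ (-(2 * (i : ℝ)))) * (∏ i, (d i)⁻¹)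
        = (Real.exp (-(4 * Real.pi) * ∑ i, (d i) ^ 2) * (∏ i, (d i) ^ 2) ^ (S - 1) *
            (∏ i : Fin n, (d i) ^ (-(2 * (i : ℝ)))) * ∏ i, (d i)⁻¹) *
          ∏ p : {p : Fin n × Fin n // p.1 < p.2},
            Real.exp (-(4 * Real.pi) * ‖u p‖ ^ 2) := by
      intro u
      rw [mul_add, Real.exp_add,
        show -(4 * Real.pi) * ∑ p : {p : Fin n × Fin n // p.1 < p.2}, ‖u p‖ ^ 2
          = ∑ p : {p : Fin n × Fin n // p.1 < p.2}, -(4 * Real.pi) * ‖u p‖ ^ 2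
          from Finset.mul_sum _ _ _, Real.exp_sum]
      ring
    simp_rw [key]
    rw [integral_const_mul, MeasureTheory.volume_pi, integral_fintype_prod_eq_pow
      (fun z : ℂ => Real.exp (-(4 * Real.pi) * ‖z‖ ^ 2)), cgauss]
    congr 1
    rw [Finset.mul_sum, Real.exp_sum,
      ← Real.finset_prod_rpow _ _ (fun i _ => sq_nonneg (d i)) _,
      ← Finset.prod_mul_distrib, ← Finset.prod_mul_distrib, ← Finset.prod_mul_distrib]
  simp_rw [hinner]
  rw [integral_mul_const,
    setIntegral_pi_prod (fun i t => Real.exp (-(4 * Real.pi) * t ^ 2) * (t ^ 2) ^ (S - 1) *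
      t ^ (-(2 * (i : ℝ))) * t⁻¹)]
  have heach : ∀ i : Fin n,
      (∫ t in Set.Ioi (0:ℝ), Real.exp (-(4 * Real.pi) * t ^ 2) * (t ^ 2) ^ (S - 1) *
        t ^ (-(2 * (i : ℝ))) * t⁻¹)
      = Real.Gamma (S - ((i:ℝ) + 1)) /
          (2 ^ (S - ((i:ℝ) + 1)) * (2 * (2 * Real.pi) ^ (S - ((i:ℝ) + 1)))) := by
    intro i
    have hi : ((i:ℕ):ℝ) + 1 ≤ (n:ℝ) := by exact_mod_cast i.isLt
    have hpos : 0 < (S - 1) - (i:ℝ) := by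
      push_cast at hi ⊢
      linarith
    have := onedim (S - 1) (i:ℝ) hpos
    rw [show (S - 1) - (i:ℝ) = S - ((i:ℝ) + 1) by ring] at this
    exact this
  simp_rw [heach]
  rw [mul_comm]
  congr 1
  · -- constant
    have h2 : 2 * c = n * (n - 1) := card_lt_pairs n
    have hcast : (-(n * (n - 1) : ℤ)) = -((2 * c : ℕ) : ℤ) := by
      rw [h2]
      push_cast [Nat.cast_sub hn]
      ring
    rw [hcast, zpow_neg, zpow_natCast, pow_mul, ← inv_pow]
    norm_num
  · rw [Fin.prod_univ_eq_prod_range (fun k : ℕ =>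
      Real.Gamma (S - ((k:ℝ) + 1)) /
        (2 ^ (S - ((k:ℝ) + 1)) * (2 * (2 * Real.pi) ^ (S - ((k:ℝ) + 1))))) n]
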